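/- Let R be a commutative ring with identity that is not a local ring. Then the graph Γ_r(R) has diameter two if and only if one of the following holds: (1) the Jacobson radical J(R) is a prime ideal of R; or (2) R has exactly two maximal ideals and R is not isomorphic to F₁ × F₂ for any fields F₁ and F₂. -/

import Mathlib

/-!
Write `J` for the Jacobson radical and call `x` a vertex if `x ∉ U(R) ∪ J`. Non-adjacent
vertices `Rx ≠ Ry` lie in a common maximal ideal. If `xy ∉ J`, an element `z` of a maximal ideal
avoiding `xy` with `Rz + Rxy = R` is a common neighbour; if `xy ∈ J`, a common neighbour would be
comaximal with an element of `J`, hence a unit. So `diam Γ_r(R) ≤ 2` iff `xy ∉ J` for all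
non-comaximal vertices `x, y`. A pair violating this needs three maximal ideals, and conversely with
three maximal ideals a witness `ab ∈ J`, `a, b ∉ J` of non-primality of `J` can be turned into one.

On the other side `diam Γ_r(R) ≥ 2` iff `Γ_r(R)` is not complete. For `F₁ × F₂` the only vertices
are `R(1, 0)` and `R(0, 1)`. Conversely, if `Γ_r(R)` is complete and `m ≠ n` are maximal, all
vertices in `m \ n` generate the same ideal; from `Rx = Rx²` one gets an idempotent `e ∈ m \ n`,
and every `z ∈ m ∩ n` lies in both `Re` and `R(1 - e)`, so `m ∩ n = 0` and `R ≅ R/m × R/n`.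
-/

universe u

/-- The co-maximal graph `Ω(R)`: vertices are the elements of `R`, with distinct `x`, `y`
adjacent iff `Rx + Ry = R`. -/
def comaximalGraph (R : Type*) [CommRing R] : SimpleGraph R where
  Adj x y := x ≠ y ∧ Ideal.span {x} ⊔ Ideal.span {y} = ⊤
  symm := ⟨fun _ _ ⟨h1, h2⟩ => ⟨h1.symm, by rwa [sup_comm]⟩⟩
  loopless := ⟨fun _ ⟨h, _⟩ => h rfl⟩

/-- Vertices of `Γ(R)`: the elements of `R \ (U(R) ∪ J(R))`. -/
def GammaVert (R : Type*) [CommRing R] : Type _ :=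
  {x : R // ¬IsUnit x ∧ x ∉ (⊥ : Ideal R).jacobson}

/-- The graph `Γ(R)` induced on `R \ (U(R) ∪ J(R))`: distinct vertices `x`, `y` are
adjacent iff `Rx + Ry = R`. -/
def Gamma (R : Type*) [CommRing R] : SimpleGraph (GammaVert R) where
  Adj a b := a ≠ b ∧ Ideal.span {a.1} ⊔ Ideal.span {b.1} = ⊤
  symm := ⟨fun _ _ ⟨h1, h2⟩ => ⟨h1.symm, by rwa [sup_comm]⟩⟩
  loopless := ⟨fun _ ⟨h, _⟩ => h rfl⟩

/-- Vertices of `Γ_r(R)`: the principal ideals `Rx` for `x ∈ R \ (U(R) ∪ J(R))`. -/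
def GammaRVert (R : Type*) [CommRing R] : Type _ :=
  {I : Ideal R // ∃ x : R, ¬IsUnit x ∧ x ∉ (⊥ : Ideal R).jacobson ∧ I = Ideal.span {x}}

/-- The graph `Γ_r(R)` on `{Rx | x ∈ R \ (U(R) ∪ J(R))}`: distinct vertices `Rx`, `Ry`
are adjacent iff `Rx + Ry = R`. -/
def GammaR (R : Type*) [CommRing R] : SimpleGraph (GammaRVert R) where
  Adj I J := I ≠ J ∧ I.1 ⊔ J.1 = ⊤
  symm := ⟨fun _ _ ⟨h1, h2⟩ => ⟨h1.symm, by rwa [sup_comm]⟩⟩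
  loopless := ⟨fun _ ⟨h, _⟩ => h rfl⟩

/-- A simple graph is a split graph if its vertex set is the disjoint union of a set
inducing a complete graph and an independent set. -/
def IsSplitGraph {V : Type*} (G : SimpleGraph V) : Prop :=
  ∃ K D : Set V, K ∪ D = Set.univ ∧ K ∩ D = ∅ ∧
    (∀ x ∈ K, ∀ y ∈ K, x ≠ y → G.Adj x y) ∧
    (∀ x ∈ D, ∀ y ∈ D, ¬G.Adj x y)

/-- A simple graph is bipartite if its vertex set is the disjoint union of two sets
such that every edge goes between them. -/
def IsBipartiteGraph {V : Type*} (G : SimpleGraph V) : Prop :=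
  ∃ A B : Set V, A ∪ B = Set.univ ∧ A ∩ B = ∅ ∧
    ∀ x y, G.Adj x y → (x ∈ A ∧ y ∈ B) ∨ (x ∈ B ∧ y ∈ A)

/-- A simple graph is complete bipartite if its vertex set is the disjoint union of two
sets such that two vertices are adjacent iff they lie in different parts. -/
def IsCompleteBipartiteGraph {V : Type*} (G : SimpleGraph V) : Prop :=
  ∃ A B : Set V, A ∪ B = Set.univ ∧ A ∩ B = ∅ ∧
    ∀ x y, G.Adj x y ↔ ((x ∈ A ∧ y ∈ B) ∨ (x ∈ B ∧ y ∈ A))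

open Ideal

theorem SimpleGraph.ediam_le_one_iff {V : Type*} {G : SimpleGraph V} : G.ediam ≤ 1 ↔ G = ⊤ := by
  simp only [ediam_le_iff, edist_le_one_iff_adj_or_eq, eq_top_iff_forall_ne_adj,
    or_iff_not_imp_right]

theorem ENat.eq_two_iff_le_two_and_not_le_one {k : ℕ∞} : k = 2 ↔ k ≤ 2 ∧ ¬k ≤ 1 := by
  induction k using ENat.recTopCoe with
  | top => simp
  | coe k => norm_cast; omega

section Ring

variable {R : Type*} [CommRing R]

theorem mem_jacobson_bot_iff_forall_isMaximal {x : R} :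
    x ∈ (⊥ : Ideal R).jacobson ↔ ∀ m : Ideal R, m.IsMaximal → x ∈ m := by
  simp only [Ideal.jacobson, mem_sInf, Set.mem_ofPred_eq, bot_le, true_and]

theorem not_isCoprime_iff_exists_isMaximal {x y : R} :
    ¬IsCoprime x y ↔ ∃ m : Ideal R, m.IsMaximal ∧ x ∈ m ∧ y ∈ m := by
  rw [← isCoprime_span_singleton_iff, isCoprime_iff_sup_eq]
  constructor
  · intro h
    obtain ⟨m, hm, hle⟩ := exists_le_maximal _ h
    exact ⟨m, hm, hle (mem_sup_left (mem_span_singleton_self x)),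
      hle (mem_sup_right (mem_span_singleton_self y))⟩
  · rintro ⟨m, hm, hxm, hym⟩ h
    refine hm.ne_top (top_le_iff.mp (h ▸ sup_le ?_ ?_)) <;> rwa [span_singleton_le_iff_mem]

theorem isUnit_of_isCoprime_of_mem_jacobson {x y : R} (h : IsCoprime x y)
    (hy : y ∈ (⊥ : Ideal R).jacobson) : IsUnit x := by
  by_contra hx
  obtain ⟨m, hm, hxm⟩ := exists_le_maximal (span {x}) (by rwa [Ne, span_singleton_eq_top])
  exact not_isCoprime_iff_exists_isMaximal.mpr
    ⟨m, hm, hxm (mem_span_singleton_self x), mem_jacobson_bot_iff_forall_isMaximal.mp hy m hm⟩ h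

theorem notMem_span_singleton_of_mul_mem_jacobson {x y : R} (hx : x ∉ (⊥ : Ideal R).jacobson)
    (hxy : x * y ∈ (⊥ : Ideal R).jacobson) : x ∉ span {y} := by
  intro h
  obtain ⟨r, rfl⟩ := mem_span_singleton'.mp h
  have : (r * y) ^ 2 ∈ (⊥ : Ideal R).jacobson := by
    rw [show (r * y) ^ 2 = r * (r * y * y) by ring]
    exact mul_mem_left _ r hxy
  exact hx (isRadical_jacobson ⊥ ⟨2, this⟩)

theorem exists_isIdempotentElem_of_mem_span_mul_self {x : R} (h : x ∈ span {x * x}) :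
    ∃ e ∈ span {x}, IsIdempotentElem e ∧ e * x = x := by
  obtain ⟨r, hr⟩ := mem_span_singleton'.mp h
  refine ⟨r * x, mul_mem_left _ r (mem_span_singleton_self x), ?_, ?_⟩
  · show r * x * (r * x) = r * x
    linear_combination r * hr
  · linear_combination hr

theorem exists_two_isMaximal [Nontrivial R] (h : ¬IsLocalRing R) :
    ∃ m n : Ideal R, m.IsMaximal ∧ n.IsMaximal ∧ m ≠ n := by
  obtain ⟨m, hm⟩ := exists_maximal R
  by_contra! hc
  exact h (IsLocalRing.of_unique_max_ideal ⟨m, hm, fun n hn => hc n m hn hm⟩)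

theorem exists_mem_notMem_of_isMaximal {m n : Ideal R} (hm : m.IsMaximal) (hn : n.IsMaximal)
    (hmn : m ≠ n) : ∃ x ∈ m, x ∉ n :=
  SetLike.not_le_iff_exists.mp fun h => hmn (hm.eq_of_le hn.ne_top h)

end Ring

namespace GammaVert

variable {R : Type*} [CommRing R]

def toGammaRVert (x : GammaVert R) : GammaRVert R :=
  ⟨span {x.1}, x.1, x.2.1, x.2.2, rfl⟩

theorem toGammaRVert_surjective : Function.Surjective (toGammaRVert (R := R)) := by
  rintro ⟨_, x, hxu, hxJ, rfl⟩
  exact ⟨⟨x, hxu, hxJ⟩, rfl⟩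

def ofMem (x : R) {m n : Ideal R} (hm : m.IsMaximal) (hn : n.IsMaximal) (hxm : x ∈ m)
    (hxn : x ∉ n) : GammaVert R :=
  ⟨x, fun hu => hm.ne_top (eq_top_of_isUnit_mem m hxm hu),
    fun hJ => hxn (mem_jacobson_bot_iff_forall_isMaximal.mp hJ n hn)⟩

theorem gammaR_adj_iff {x y : GammaVert R} :
    (GammaR R).Adj x.toGammaRVert y.toGammaRVert ↔ IsCoprime x.1 y.1 := by
  rw [← isCoprime_span_singleton_iff, isCoprime_iff_sup_eq]
  refine ⟨And.right, fun h => ⟨fun hxy => x.2.1 ?_, h⟩⟩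
  have hspan : span {x.1} = span {y.1} := congrArg Subtype.val hxy
  rwa [← hspan, sup_idem, span_singleton_eq_top] at h

end GammaVert

section GammaR

variable {R : Type*} [CommRing R]

open GammaVert

theorem exists_isCoprime_isCoprime_of_mul_notMem_jacobson {x y : R} (hu : ¬IsUnit (x * y))
    (hJ : x * y ∉ (⊥ : Ideal R).jacobson) :
    ∃ z : GammaVert R, IsCoprime z.1 x ∧ IsCoprime z.1 y := by
  obtain ⟨m₀, hm₀, hxy₀⟩ : ∃ m : Ideal R, m.IsMaximal ∧ x * y ∉ m := by
    simpa [mem_jacobson_bot_iff_forall_isMaximal] using hJ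
  obtain ⟨m₁, hm₁, hxy₁⟩ := exists_le_maximal (span {x * y}) (by rwa [Ne, span_singleton_eq_top])
  obtain ⟨r, z, hz, hrz⟩ := hm₀.exists_inv hxy₀
  have hcop : IsCoprime z (x * y) := ⟨1, r, by linear_combination hrz⟩
  refine ⟨⟨z, fun hzu => hm₀.ne_top (eq_top_of_isUnit_mem _ hz hzu), fun hzJ => ?_⟩,
    hcop.of_mul_right_left, hcop.of_mul_right_right⟩
  exact not_isCoprime_iff_exists_isMaximal.mpr ⟨m₁, hm₁,
    mem_jacobson_bot_iff_forall_isMaximal.mp hzJ m₁ hm₁, hxy₁ (mem_span_singleton_self _)⟩ hcop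

theorem gammaR_ediam_le_two_iff :
    (GammaR R).ediam ≤ 2 ↔
      ∀ x y : GammaVert R, ¬IsCoprime x.1 y.1 → x.1 * y.1 ∉ (⊥ : Ideal R).jacobson := by
  constructor
  · intro h x y hxy hJ
    have hne : x.toGammaRVert ≠ y.toGammaRVert := fun hEq => by
      have hspan : span {x.1} = span {y.1} := congrArg Subtype.val hEq
      exact notMem_span_singleton_of_mul_mem_jacobson x.2.2 hJ (hspan ▸ mem_span_singleton_self _)
    have hfar : 2 < (GammaR R).edist x.toGammaRVert y.toGammaRVert := by
      refine SimpleGraph.two_lt_edist_iff.mpr ⟨hne, mt gammaR_adj_iff.mp hxy, ?_⟩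
      refine Set.eq_empty_of_forall_notMem fun w hw => ?_
      obtain ⟨z, rfl⟩ := toGammaRVert_surjective w
      rw [SimpleGraph.mem_commonNeighbors, gammaR_adj_iff, gammaR_adj_iff] at hw
      exact z.2.1 (isUnit_of_isCoprime_of_mem_jacobson (hw.1.mul_left hw.2).symm hJ)
    exact (hfar.trans_le SimpleGraph.edist_le_ediam).not_ge h
  · intro h
    refine SimpleGraph.ediam_le_of_edist_le fun u v => ?_
    obtain ⟨x, rfl⟩ := toGammaRVert_surjective u
    obtain ⟨y, rfl⟩ := toGammaRVert_surjective v
    by_cases hxy : IsCoprime x.1 y.1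
    · exact (SimpleGraph.edist_le_one_iff_adj_or_eq.mpr (.inl (gammaR_adj_iff.mpr hxy))).trans
        one_le_two
    · obtain ⟨z, hzx, hzy⟩ := exists_isCoprime_isCoprime_of_mul_notMem_jacobson
        (fun hu => x.2.1 (isUnit_of_mul_isUnit_left hu)) (h x y hxy)
      exact (SimpleGraph.Walk.cons (gammaR_adj_iff.mpr hzx.symm)
        (.cons (gammaR_adj_iff.mpr hzy) .nil)).edist_le

theorem span_eq_of_gammaR_eq_top (hG : GammaR R = ⊤)
    {x y : GammaVert R} {m : Ideal R} (hm : m.IsMaximal) (hx : x.1 ∈ m) (hy : y.1 ∈ m) :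
    span {x.1} = span {y.1} := by
  by_contra hne
  exact not_isCoprime_iff_exists_isMaximal.mpr ⟨m, hm, hx, hy⟩
    (gammaR_adj_iff.mp (SimpleGraph.eq_top_iff_forall_ne_adj.mp hG _ _
      fun hEq => hne (congrArg Subtype.val hEq)))

theorem mem_span_of_gammaR_eq_top (hG : GammaR R = ⊤)
    {m n : Ideal R} (hm : m.IsMaximal) (hn : n.IsMaximal) {a z : R} (ham : a ∈ m) (han : a ∉ n)
    (hz : z ∈ m ⊓ n) : z ∈ span {a} := by
  have hazn : a + z ∉ n := fun h => han (by simpa using n.sub_mem h hz.2)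
  have hspan := span_eq_of_gammaR_eq_top hG (x := ofMem (a + z) hm hn (m.add_mem ham hz.1) hazn)
    (y := ofMem a hm hn ham han) hm (m.add_mem ham hz.1) ham
  have haz : a + z ∈ span {a} := hspan ▸ mem_span_singleton_self (a + z)
  simpa using sub_mem haz (mem_span_singleton_self a)

theorem inf_eq_bot_of_gammaR_eq_top (hG : GammaR R = ⊤)
    {m n : Ideal R} (hm : m.IsMaximal) (hn : n.IsMaximal) (hmn : m ≠ n) : m ⊓ n = ⊥ := by
  obtain ⟨x, hxm, hxn⟩ := exists_mem_notMem_of_isMaximal hm hn hmn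
  have hxxn : x * x ∉ n := fun h => hxn ((hn.isPrime.mem_or_mem h).elim id id)
  have hspan := span_eq_of_gammaR_eq_top hG (x := ofMem x hm hn hxm hxn)
    (y := ofMem (x * x) hm hn (m.mul_mem_right x hxm) hxxn) hm hxm (m.mul_mem_right x hxm)
  obtain ⟨e, hex, he, hexx⟩ :=
    exists_isIdempotentElem_of_mem_span_mul_self (hspan ▸ mem_span_singleton_self x)
  have hem : e ∈ m := (span_singleton_le_iff_mem m).mpr hxm hex
  have hen : e ∉ n := fun h => hxn (hexx ▸ n.mul_mem_right x h)
  have hfn : 1 - e ∈ n :=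
    (hn.isPrime.mem_or_mem (he.mul_one_sub_self ▸ n.zero_mem)).resolve_left hen
  have hfm : 1 - e ∉ m := fun h =>
    hm.ne_top ((eq_top_iff_one m).mpr (by simpa using m.add_mem hem h))
  refine eq_bot_iff.mpr fun z hz => ?_
  obtain ⟨s, hs⟩ := mem_span_singleton'.mp (mem_span_of_gammaR_eq_top hG hm hn hem hen hz)
  obtain ⟨t, ht⟩ := mem_span_singleton'.mp
    (mem_span_of_gammaR_eq_top hG hn hm hfn hfm (inf_comm m n ▸ hz))
  have he' : e * e = e := he
  rw [mem_bot]
  linear_combination (e - 1) * hs - e * ht - (t + s) * he'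

theorem span_eq_or_span_eq_of_ringEquiv_prod {F₁ F₂ : Type*} [Field F₁] [Field F₂]
    (f : R ≃+* F₁ × F₂) {x : R} (hx0 : x ≠ 0) (hxu : ¬IsUnit x) :
    span {x} = span {f.symm (1, 0)} ∨ span {x} = span {f.symm (0, 1)} := by
  rw [← MulEquiv.isUnit_map f, Prod.isUnit_iff] at hxu
  rw [← (map_ne_zero_iff f f.injective)] at hx0
  rcases hfx : f x with ⟨a, b⟩
  simp only [hfx, isUnit_iff_ne_zero, ne_eq, Prod.mk_eq_zero, not_and_or, not_not] at hx0 hxu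
  rcases hxu with rfl | rfl
  · right
    have hb : b ≠ 0 := by simpa using hx0
    rw [show x = f.symm (1, b) * f.symm (0, 1) from f.injective (by simp [hfx]),
      span_singleton_mul_left_unit ((Prod.isUnit_iff.mpr ⟨isUnit_one, hb.isUnit⟩).map f.symm)]
  · left
    have ha : a ≠ 0 := by simpa using hx0
    rw [show x = f.symm (a, 1) * f.symm (1, 0) from f.injective (by simp [hfx]),
      span_singleton_mul_left_unit ((Prod.isUnit_iff.mpr ⟨ha.isUnit, isUnit_one⟩).map f.symm)]

theorem gammaR_eq_top_of_ringEquiv_prod {F₁ F₂ : Type*} [Field F₁] [Field F₂]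
    (f : R ≃+* F₁ × F₂) : GammaR R = ⊤ := by
  refine SimpleGraph.eq_top_iff_forall_ne_adj.mpr fun u v huv => ?_
  obtain ⟨x, rfl⟩ := toGammaRVert_surjective u
  obtain ⟨y, rfl⟩ := toGammaRVert_surjective v
  have hne : span {x.1} ≠ span {y.1} := fun h => huv (Subtype.ext h)
  have hcop : IsCoprime (span {f.symm (1, 0)}) (span {f.symm (0, 1)}) :=
    (isCoprime_span_singleton_iff _ _).mpr ⟨1, 1, f.injective (by simp)⟩
  rw [gammaR_adj_iff, ← isCoprime_span_singleton_iff]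
  have spans (z : GammaVert R) := span_eq_or_span_eq_of_ringEquiv_prod f
    (fun h : z.1 = 0 => z.2.2 (h ▸ zero_mem _)) z.2.1
  rcases spans x with hx | hx <;> rcases spans y with hy | hy <;>
    rw [hx, hy] at hne ⊢
  exacts [absurd rfl hne, hcop, hcop.symm, absurd rfl hne]

theorem exists_three_isMaximal_of_mul_mem_jacobson {x y : GammaVert R}
    (hxy : ¬IsCoprime x.1 y.1) (hJ : x.1 * y.1 ∈ (⊥ : Ideal R).jacobson) :
    ∃ p q r : Ideal R, p.IsMaximal ∧ q.IsMaximal ∧ r.IsMaximal ∧ p ≠ q ∧ p ≠ r ∧ q ≠ r := by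
  obtain ⟨p, hp, hxp, hyp⟩ := not_isCoprime_iff_exists_isMaximal.mp hxy
  obtain ⟨q, hq, hxq⟩ : ∃ q : Ideal R, q.IsMaximal ∧ x.1 ∉ q := by
    simpa [mem_jacobson_bot_iff_forall_isMaximal] using x.2.2
  obtain ⟨r, hr, hyr⟩ : ∃ r : Ideal R, r.IsMaximal ∧ y.1 ∉ r := by
    simpa [mem_jacobson_bot_iff_forall_isMaximal] using y.2.2
  have hyq : y.1 ∈ q := (hq.isPrime.mem_or_mem
    (mem_jacobson_bot_iff_forall_isMaximal.mp hJ q hq)).resolve_left hxq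
  refine ⟨p, q, r, hp, hq, hr, ?_, ?_, ?_⟩ <;> rintro rfl <;> contradiction

theorem exists_not_isCoprime_mul_mem_jacobson_of_mem_inf (x : GammaVert R) {b : R}
    (hcop : IsCoprime x.1 b) (hxb : x.1 * b ∈ (⊥ : Ideal R).jacobson) {q₁ q₂ : Ideal R}
    (hq₁ : q₁.IsMaximal) (hq₂ : q₂.IsMaximal) (hne : q₁ ≠ q₂) (hx : x.1 ∈ q₁ ⊓ q₂) :
    ∃ y : GammaVert R, ¬IsCoprime x.1 y.1 ∧ x.1 * y.1 ∈ (⊥ : Ideal R).jacobson := by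
  obtain ⟨e, he₁, he₂⟩ := exists_mem_notMem_of_isMaximal hq₁ hq₂ hne
  have hb₂ : b ∉ q₂ := fun hb => not_isCoprime_iff_exists_isMaximal.mpr ⟨q₂, hq₂, hx.2, hb⟩ hcop
  have hbe₁ : b * e ∈ q₁ := q₁.mul_mem_left b he₁
  have hbe₂ : b * e ∉ q₂ := fun h => (hq₂.isPrime.mem_or_mem h).elim hb₂ he₂
  refine ⟨ofMem (b * e) hq₁ hq₂ hbe₁ hbe₂,
    not_isCoprime_iff_exists_isMaximal.mpr ⟨q₁, hq₁, hx.1, hbe₁⟩, ?_⟩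
  change x.1 * (b * e) ∈ _
  rw [← mul_assoc]
  exact mul_mem_right _ _ hxb

theorem exists_not_isCoprime_mul_mem_jacobson (hJ : ¬(⊥ : Ideal R).jacobson.IsPrime)
    {m n p : Ideal R} (hm : m.IsMaximal) (hn : n.IsMaximal) (hp : p.IsMaximal) (hmn : m ≠ n)
    (hmp : m ≠ p) (hnp : n ≠ p) :
    ∃ x y : GammaVert R, ¬IsCoprime x.1 y.1 ∧ x.1 * y.1 ∈ (⊥ : Ideal R).jacobson := by
  have hJm : (⊥ : Ideal R).jacobson ≤ m := sInf_le ⟨bot_le, hm⟩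
  obtain ⟨a, ha, b, hb, hab⟩ :=
    (not_isPrime_iff.mp hJ).resolve_left (ne_top_of_le_ne_top hm.ne_top hJm)
  have hba : b * a ∈ (⊥ : Ideal R).jacobson := mul_comm a b ▸ hab
  let x : GammaVert R := ⟨a, fun hu => hb ((unit_mul_mem_iff_mem _ hu).mp hab), ha⟩
  let y : GammaVert R := ⟨b, fun hu => ha ((unit_mul_mem_iff_mem _ hu).mp hba), hb⟩
  by_cases hcop : IsCoprime a b
  swap
  · exact ⟨x, y, hcop, hab⟩
  have hsplit (q : Ideal R) (hq : q.IsMaximal) : a ∈ q ∨ b ∈ q :=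
    hq.isPrime.mem_or_mem (mem_jacobson_bot_iff_forall_isMaximal.mp hab q hq)
  obtain ⟨q₁, q₂, hq₁, hq₂, hne, ⟨ha₁, ha₂⟩ | ⟨hb₁, hb₂⟩⟩ : ∃ q₁ q₂ : Ideal R, q₁.IsMaximal ∧
      q₂.IsMaximal ∧ q₁ ≠ q₂ ∧ ((a ∈ q₁ ∧ a ∈ q₂) ∨ (b ∈ q₁ ∧ b ∈ q₂)) := by
    rcases hsplit m hm with hma | hmb <;> rcases hsplit n hn with hna | hnb <;>
      rcases hsplit p hp with hpa | hpb <;>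
      first
      | exact ⟨m, n, hm, hn, hmn, by tauto⟩
      | exact ⟨m, p, hm, hp, hmp, by tauto⟩
      | exact ⟨n, p, hn, hp, hnp, by tauto⟩
  · exact ⟨x, exists_not_isCoprime_mul_mem_jacobson_of_mem_inf x hcop hab hq₁ hq₂ hne ⟨ha₁, ha₂⟩⟩
  · exact ⟨y, exists_not_isCoprime_mul_mem_jacobson_of_mem_inf y hcop.symm hba hq₁ hq₂ hne
      ⟨hb₁, hb₂⟩⟩

end GammaR

theorem exists_ringEquiv_prod_of_inf_eq_bot {R : Type u} [CommRing R] {m n : Ideal R}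
    (hm : m.IsMaximal) (hn : n.IsMaximal) (hmn : m ≠ n) (h : m ⊓ n = ⊥) :
    ∃ (F₁ F₂ : Type u) (_ : Field F₁) (_ : Field F₂), Nonempty (R ≃+* (F₁ × F₂)) :=
  ⟨R ⧸ m, R ⧸ n, Quotient.field m, Quotient.field n,
    ⟨(RingEquiv.quotientBot R).symm.trans ((quotEquivOfEq h.symm).trans
      (quotientInfEquivQuotientProd m n (isCoprime_of_isMaximal hmn)))⟩⟩

/-- Proposition 4.8: for a non-local commutative ring `R`, the graph `Γ_r(R)` has
diameter two iff either `J(R)` is a prime ideal, or `R` has exactly two maximal ideals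
and `R` is not isomorphic to a product of two fields. -/
theorem gammaR_diam_two_iff (R : Type u) [CommRing R] [Nontrivial R]
    (h : ¬IsLocalRing R) :
    (GammaR R).ediam = 2 ↔
      ((⊥ : Ideal R).jacobson.IsPrime ∨
        ((∃ m n : Ideal R, m.IsMaximal ∧ n.IsMaximal ∧ m ≠ n ∧
            ∀ p : Ideal R, p.IsMaximal → p = m ∨ p = n) ∧
          ¬∃ (F₁ F₂ : Type u) (_ : Field F₁) (_ : Field F₂),
            Nonempty (R ≃+* (F₁ × F₂)))) := by
  rw [ENat.eq_two_iff_le_two_and_not_le_one, gammaR_ediam_le_two_iff,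
    SimpleGraph.ediam_le_one_iff]
  constructor
  · rintro ⟨hC, hG⟩
    refine or_iff_not_imp_left.mpr fun hJ => ⟨?_, fun ⟨_, _, _, _, ⟨f⟩⟩ =>
      hG (gammaR_eq_top_of_ringEquiv_prod f)⟩
    obtain ⟨m, n, hm, hn, hmn⟩ := exists_two_isMaximal h
    refine ⟨m, n, hm, hn, hmn, fun p hp => ?_⟩
    by_contra! hp'
    obtain ⟨x, y, hxy, hxyJ⟩ :=
      exists_not_isCoprime_mul_mem_jacobson hJ hm hn hp hmn (Ne.symm hp'.1) (Ne.symm hp'.2)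
    exact hC x y hxy hxyJ
  · rintro (hJ | ⟨⟨m, n, hm, hn, hmn, hmax⟩, hprod⟩)
    · refine ⟨fun x y _ hxy => (hJ.mem_or_mem hxy).elim x.2.2 y.2.2, fun hG => ?_⟩
      obtain ⟨m, n, hm, hn, hmn⟩ := exists_two_isMaximal h
      rcases hJ.inf_le.mp (inf_eq_bot_of_gammaR_eq_top hG hm hn hmn ▸ bot_le) with hle | hle
      · exact hmn (hm.eq_of_le hn.ne_top (hle.trans (sInf_le ⟨bot_le, hn⟩)))
      · exact hmn (hn.eq_of_le hm.ne_top (hle.trans (sInf_le ⟨bot_le, hm⟩))).symm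
    · refine ⟨fun x y hxy hxyJ => ?_, fun hG => hprod (exists_ringEquiv_prod_of_inf_eq_bot
        hm hn hmn (inf_eq_bot_of_gammaR_eq_top hG hm hn hmn))⟩
      obtain ⟨p, q, r, hp, hq, hr, hpq, hpr, hqr⟩ :=
        exists_three_isMaximal_of_mul_mem_jacobson hxy hxyJ
      rcases hmax p hp with rfl | rfl <;> rcases hmax q hq with rfl | rfl <;>
        rcases hmax r hr with rfl | rfl <;> contradiction
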